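/- Let K₁ > 0 and K₂ be real constants with |K₂| < K₁. Suppose x, u : ℝ → ℝ are differentiable, x(t) > 0 for all t ≥ 0, and they satisfy ẋ(t) = (1 − x(t)) x(t) − x(t) u(t) and u̇(t) = K₁(x(t) − 1) − K₂ for all t ≥ 0. Then x(t) → K₂/K₁ + 1 and u(t) → −K₂/K₁ as t → ∞; in particular the normalized resource level converges to the strictly positive value K₂/K₁ + 1, so the network continuously consumes the resource without driving it to zero. -/

import Mathlib

/-!
Put `xₑ = K₂/K₁ + 1 > 0`. The point `(xₑ, 1 - xₑ)` is an equilibrium, and the Volterra-type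
function `V = K₁ (x - xₑ log x) + (u - (1 - xₑ))² / 2` satisfies `V̇ = -K₁ (x - xₑ)²` along
trajectories. So `V` decreases and, being bounded below, converges; its sublevel sets are bounded,
so the trajectory is bounded too. Barbalat's lemma (a convergent function with bounded second
derivative has derivative tending to `0`) applied to `V` gives `x → xₑ`, and applied to `log x`,
whose derivative is `1 - x - u`, it gives `u → 1 - xₑ`.
-/

open Filter Set Topology Real

lemma AntitoneOn.exists_tendsto_atTop_of_bddBelow {f : ℝ → ℝ} {a : ℝ}
    (hf : AntitoneOn f (Ici a)) (hb : BddBelow (f '' Ici a)) :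
    ∃ L, Tendsto f atTop (𝓝 L) := by
  refine ⟨_, tendsto_comp_val_Ici_atTop.1 (tendsto_atTop_ciInf (antitoneOn_iff_antitone.1 hf) ?_)⟩
  rwa [← image_eq_range]

theorem tendsto_deriv_zero_of_tendsto_of_bounded_deriv₂ {f f' f'' : ℝ → ℝ} {a C L : ℝ}
    (hf : ∀ t ≥ a, HasDerivAt f (f' t) t) (hf' : ∀ t ≥ a, HasDerivAt f' (f'' t) t)
    (hf'' : ∀ t ≥ a, |f'' t| ≤ C) (hfL : Tendsto f atTop (𝓝 L)) :
    Tendsto f' atTop (𝓝 0) := by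
  have hC : 0 ≤ C := (abs_nonneg _).trans (hf'' a le_rfl)
  have hlip : ∀ s ≥ a, ∀ t ≥ a, |f' s - f' t| ≤ C * |s - t| := fun s hs t ht =>
    (convex_Ici a).norm_image_sub_le_of_norm_hasDerivWithin_le
      (fun r hr => (hf' r hr).hasDerivWithinAt) (fun r hr => hf'' r hr) ht hs
  rw [Metric.tendsto_atTop]
  intro ε hε
  set δ := ε / (2 * (C + 1)) with hδ
  have hδpos : 0 < δ := by positivity
  have hCδ : C * δ < ε / 2 := by
    rw [hδ, mul_div_assoc', div_lt_div_iff₀ (by positivity) two_pos]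
    nlinarith
  have hincr : Tendsto (fun t => f (t + δ) - f t) atTop (𝓝 0) := by
    simpa using (hfL.comp (tendsto_atTop_add_const_right _ δ tendsto_id)).sub hfL
  obtain ⟨N, hN⟩ := Metric.tendsto_atTop.1 hincr (δ * (ε / 2)) (by positivity)
  refine ⟨max N a, fun t ht => ?_⟩
  have hta : a ≤ t := le_of_max_le_right ht
  obtain ⟨ξ, hξ, hslope⟩ := exists_hasDerivAt_eq_slope f f' (lt_add_of_pos_right t hδpos)
    (fun r hr => (hf r (hta.trans hr.1)).continuousAt.continuousWithinAt)
    (fun r hr => hf r (hta.trans hr.1.le))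
  have hslope_small : |f' ξ| < ε / 2 := by
    have := hN t (le_of_max_le_left ht)
    rw [Real.dist_eq, sub_zero] at this
    rw [hslope, add_sub_cancel_left, abs_div, abs_of_pos hδpos, div_lt_iff₀ hδpos]
    linarith
  have hvar : |f' t - f' ξ| ≤ C * δ := by
    calc |f' t - f' ξ| ≤ C * |t - ξ| := hlip t hta ξ (hta.trans hξ.1.le)
      _ ≤ C * δ := by
        gcongr
        rw [abs_sub_comm, abs_of_pos (sub_pos.2 hξ.1)]
        linarith [hξ.2]
  rw [Real.dist_eq, sub_zero]
  linarith [abs_sub_abs_le_abs_sub (f' t) (f' ξ)]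

lemma exists_bound_comp_of_norm_le {E : Type*} [NormedAddCommGroup E] [ProperSpace E]
    {F : E → ℝ} (hF : Continuous F) {γ : ℝ → E} {a C : ℝ} (hγ : ∀ t ≥ a, ‖γ t‖ ≤ C) :
    ∃ D, ∀ t ≥ a, |F (γ t)| ≤ D := by
  obtain ⟨D, hD⟩ := (isCompact_closedBall (0 : E) C).exists_bound_of_continuousOn hF.continuousOn
  exact ⟨D, fun t ht => hD _ (mem_closedBall_zero_iff.2 (hγ t ht))⟩

lemma mul_log_le_tangent {b c y : ℝ} (hc : 0 ≤ c) (hb : 0 < b) (hy : 0 < y) :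
    c * log y ≤ c * log b + c / b * y - c := by
  have := log_le_sub_one_of_pos (div_pos hy hb)
  rw [log_div hy.ne' hb.ne'] at this
  have := mul_le_mul_of_nonneg_left this hc
  rw [mul_sub, mul_sub, mul_div_assoc', mul_one, ← div_mul_eq_mul_div] at this
  linarith

lemma sub_mul_log_le_sub_mul_log {c y : ℝ} (hc : 0 < c) (hy : 0 < y) :
    c - c * log c ≤ y - c * log y := by
  have h := mul_log_le_tangent hc.le hc hy
  rw [div_self hc.ne', one_mul] at h
  linarith

noncomputable def lyapunov (K₁ xₑ p q : ℝ) : ℝ :=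
  K₁ * (p - xₑ * log p) + (q - (1 - xₑ)) ^ 2 / 2

lemma lyapunov_ge {K₁ xₑ p : ℝ} (hK₁ : 0 ≤ K₁) (hxₑ : 0 < xₑ) (hp : 0 < p) (q : ℝ) :
    K₁ * (xₑ - xₑ * log xₑ) ≤ lyapunov K₁ xₑ p q := by
  have := mul_le_mul_of_nonneg_left (sub_mul_log_le_sub_mul_log hxₑ hp) hK₁
  unfold lyapunov
  nlinarith [sq_nonneg (q - (1 - xₑ))]

lemma exists_norm_le_of_lyapunov_le {K₁ xₑ : ℝ} (hK₁ : 0 < K₁) (hxₑ : 0 < xₑ) (B : ℝ) :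
    ∃ C, ∀ p > 0, ∀ q, lyapunov K₁ xₑ p q ≤ B → ‖(p, q)‖ ≤ C := by
  refine ⟨max (2 * (B / K₁ + xₑ * log (2 * xₑ) - xₑ))
    (|1 - xₑ| + √(2 * (B - K₁ * (xₑ - xₑ * log xₑ)))), fun p hp q hV => ?_⟩
  rw [Prod.norm_def, Real.norm_of_nonneg hp.le, Real.norm_eq_abs]
  apply max_le_max
  · -- the tangent of `log` at `2 xₑ` absorbs half of `p`
    have hlog := mul_log_le_tangent hxₑ.le (by positivity : 0 < 2 * xₑ) hp
    have hcancel : xₑ / (2 * xₑ) * p = p / 2 := by field_simp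
    have : K₁ * (p - xₑ * log p) ≤ B := by
      unfold lyapunov at hV; nlinarith [sq_nonneg (q - (1 - xₑ))]
    rw [← le_div_iff₀' hK₁] at this
    nlinarith
  · have hsq : (q - (1 - xₑ)) ^ 2 ≤ 2 * (B - K₁ * (xₑ - xₑ * log xₑ)) := by
      have := mul_le_mul_of_nonneg_left (sub_mul_log_le_sub_mul_log hxₑ hp) hK₁.le
      unfold lyapunov at hV
      linarith
    calc |q| ≤ |1 - xₑ| + |q - (1 - xₑ)| := by
          linarith [abs_sub_abs_le_abs_sub q (1 - xₑ)]
      _ ≤ _ := by gcongr; exact abs_le_sqrt hsq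

/-- `u̇ = K₁ (x - 1) - K₂` is written as `u̇ = K₁ (x - xₑ)`, with `xₑ = K₂/K₁ + 1`. -/
structure IsTrajectory (K₁ xₑ : ℝ) (x u : ℝ → ℝ) : Prop where
  pos : ∀ t ≥ 0, 0 < x t
  hasDerivAt_x : ∀ t ≥ 0, HasDerivAt x ((1 - x t) * x t - x t * u t) t
  hasDerivAt_u : ∀ t ≥ 0, HasDerivAt u (K₁ * (x t - xₑ)) t

namespace IsTrajectory

variable {K₁ xₑ : ℝ} {x u : ℝ → ℝ}

lemma hasDerivAt_log (h : IsTrajectory K₁ xₑ x u) {t : ℝ} (ht : 0 ≤ t) :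
    HasDerivAt (fun s => log (x s)) (1 - x t - u t) t := by
  have hxt := (h.pos t ht).ne'
  refine ((h.hasDerivAt_x t ht).log hxt).congr_deriv ?_
  field_simp

lemma hasDerivAt_lyapunov (h : IsTrajectory K₁ xₑ x u) {t : ℝ} (ht : 0 ≤ t) :
    HasDerivAt (fun s => lyapunov K₁ xₑ (x s) (u s)) (-(K₁ * (x t - xₑ) ^ 2)) t := by
  refine ((((h.hasDerivAt_x t ht).sub ((h.hasDerivAt_log ht).const_mul xₑ)).const_mul K₁).add
    ((((h.hasDerivAt_u t ht).sub_const (1 - xₑ)).pow 2).div_const 2)).congr_deriv ?_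
  ring

lemma antitoneOn_lyapunov (h : IsTrajectory K₁ xₑ x u) (hK₁ : 0 ≤ K₁) :
    AntitoneOn (fun t => lyapunov K₁ xₑ (x t) (u t)) (Ici 0) :=
  antitoneOn_of_hasDerivWithinAt_nonpos (convex_Ici 0)
    (fun t ht => (h.hasDerivAt_lyapunov ht).continuousAt.continuousWithinAt)
    (fun t ht => (h.hasDerivAt_lyapunov (interior_subset ht)).hasDerivWithinAt)
    (fun t _ => by have := sq_nonneg (x t - xₑ); nlinarith)

lemma exists_norm_le (h : IsTrajectory K₁ xₑ x u) (hK₁ : 0 < K₁) (hxₑ : 0 < xₑ) :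
    ∃ C, ∀ t ≥ 0, ‖(x t, u t)‖ ≤ C := by
  obtain ⟨C, hC⟩ := exists_norm_le_of_lyapunov_le hK₁ hxₑ (lyapunov K₁ xₑ (x 0) (u 0))
  exact ⟨C, fun t ht => hC _ (h.pos t ht) _ (h.antitoneOn_lyapunov hK₁.le self_mem_Ici ht ht)⟩

lemma exists_tendsto_lyapunov (h : IsTrajectory K₁ xₑ x u) (hK₁ : 0 < K₁) (hxₑ : 0 < xₑ) :
    ∃ L, Tendsto (fun t => lyapunov K₁ xₑ (x t) (u t)) atTop (𝓝 L) := by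
  refine (h.antitoneOn_lyapunov hK₁.le).exists_tendsto_atTop_of_bddBelow
    ⟨K₁ * (xₑ - xₑ * log xₑ), ?_⟩
  rintro _ ⟨t, ht, rfl⟩
  exact lyapunov_ge hK₁.le hxₑ (h.pos t ht) (u t)

theorem tendsto_x (h : IsTrajectory K₁ xₑ x u) (hK₁ : 0 < K₁) (hxₑ : 0 < xₑ) :
    Tendsto x atTop (𝓝 xₑ) := by
  obtain ⟨L, hL⟩ := h.exists_tendsto_lyapunov hK₁ hxₑ
  obtain ⟨C, hC⟩ := h.exists_norm_le hK₁ hxₑ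
  obtain ⟨D, hD⟩ := exists_bound_comp_of_norm_le
    (F := fun p : ℝ × ℝ => -(K₁ * (2 * (p.1 - xₑ) * ((1 - p.1) * p.1 - p.1 * p.2))))
    (by fun_prop) hC
  have hV' : Tendsto (fun t => -(K₁ * (x t - xₑ) ^ 2)) atTop (𝓝 0) := by
    refine tendsto_deriv_zero_of_tendsto_of_bounded_deriv₂ (fun t ht => h.hasDerivAt_lyapunov ht)
      (fun t ht => ?_) hD hL
    refine ((((h.hasDerivAt_x t ht).sub_const xₑ).pow 2).const_mul K₁).neg.congr_deriv ?_
    ring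
  have hsq : Tendsto (fun t => (x t - xₑ) ^ 2) atTop (𝓝 0) := by
    simpa [hK₁.ne'] using hV'.const_mul (-K₁⁻¹)
  have habs : Tendsto (fun t => |x t - xₑ|) atTop (𝓝 0) := by
    simpa [sqrt_sq_eq_abs] using hsq.sqrt
  exact tendsto_sub_nhds_zero_iff.1 ((tendsto_zero_iff_abs_tendsto_zero _).2 habs)

theorem tendsto_u (h : IsTrajectory K₁ xₑ x u) (hK₁ : 0 < K₁) (hxₑ : 0 < xₑ) :
    Tendsto u atTop (𝓝 (1 - xₑ)) := by
  have hx := h.tendsto_x hK₁ hxₑ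
  obtain ⟨C, hC⟩ := h.exists_norm_le hK₁ hxₑ
  obtain ⟨D, hD⟩ := exists_bound_comp_of_norm_le
    (F := fun p : ℝ × ℝ => -((1 - p.1) * p.1 - p.1 * p.2) - K₁ * (p.1 - xₑ)) (by fun_prop) hC
  have hgrowth : Tendsto (fun t => 1 - x t - u t) atTop (𝓝 0) :=
    tendsto_deriv_zero_of_tendsto_of_bounded_deriv₂ (fun t ht => h.hasDerivAt_log ht)
      (fun t ht => ((h.hasDerivAt_x t ht).const_sub 1).sub (h.hasDerivAt_u t ht)) hD
      ((continuousAt_log hxₑ.ne').tendsto.comp hx)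
  simpa using (hx.const_sub 1).sub hgrowth

end IsTrajectory

/-- The normalized resource level converges to the strictly positive value
`K₂/K₁ + 1` and the aggregate consumption converges to `-K₂/K₁`. -/
theorem resource_converges_positive (K₁ K₂ : ℝ) (hK₁ : 0 < K₁)
    (hK₂ : |K₂| < K₁) (x u : ℝ → ℝ)
    (hx_pos : ∀ t ≥ (0 : ℝ), 0 < x t)
    (hx : ∀ t ≥ (0 : ℝ), HasDerivAt x ((1 - x t) * x t - x t * u t) t)
    (hu : ∀ t ≥ (0 : ℝ), HasDerivAt u (K₁ * (x t - 1) - K₂) t) :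
    Tendsto x atTop (nhds (K₂ / K₁ + 1)) ∧
      Tendsto u atTop (nhds (-(K₂ / K₁))) ∧ 0 < K₂ / K₁ + 1 := by
  have hxₑ : 0 < K₂ / K₁ + 1 := by
    have : -1 < K₂ / K₁ := by rw [lt_div_iff₀ hK₁]; linarith [(abs_lt.1 hK₂).1]
    linarith
  have h : IsTrajectory K₁ (K₂ / K₁ + 1) x u := by
    refine ⟨hx_pos, hx, fun t ht => (hu t ht).congr_deriv ?_⟩
    field_simp
    ring
  refine ⟨h.tendsto_x hK₁ hxₑ, ?_, hxₑ⟩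
  simpa using h.tendsto_u hK₁ hxₑ
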